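/- Let V be a positive random variable with Laplace transform ψ, and let E_{11},...,E_{1p}, E_{21},...,E_{2q} be iid standard exponentials independent of V. Then for a, b > 0, P(E_{11}+...+E_{1p} > V·a, E_{21}+...+E_{2q} > V·b) = Σ_{m=0}^{(p−1)(q−1)} ( Σ_{n=0}^{m} a^n/n! · b^{m−n}/(m−n)! ) (−1)^m ψ^{(m)}(a+b). -/

import Mathlib

/-!
Conditionally on `V = v`, the two sums are independent Erlang variables, and the tail `T_n(x)` of
an Erlang(n) variable is `e^{-x} ∑_{k<n} x^k/k!` (by induction on `n`, convolving with one more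
exponential). Hence the probability is `E[T_p(Va) T_q(Vb)]`; expanding the product gives a
combination of the moments `E[V^m e^{-(a+b)V}]`, which equal `(-1)^m ψ^{(m)}(a+b)` by
differentiating the Laplace transform under the integral sign. Grouping terms by `m = k + l`
gives the formula.
-/

open MeasureTheory ProbabilityTheory Real Set
open scoped ENNReal Nat

instance : IsProbabilityMeasure (expMeasure 1) := isProbabilityMeasure_expMeasure one_pos

lemma expMeasure_one_eq_withDensity :
    expMeasure 1 = (volume.restrict (Ioi 0)).withDensity fun t => ENNReal.ofReal (exp (-t)) := by
  have hpdf : gammaPDF 1 1 = (Ici 0).indicator fun t => ENNReal.ofReal (exp (-t)) := by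
    ext t
    by_cases ht : 0 ≤ t <;> simp [gammaPDF_eq, ht]
  rw [expMeasure, gammaMeasure, hpdf, withDensity_indicator measurableSet_Ici,
    Measure.restrict_congr_set Ioi_ae_eq_Ici]

lemma lintegral_Ioi_ofReal_exp_neg (x : ℝ) :
    ∫⁻ t in Ioi x, ENNReal.ofReal (exp (-t)) = ENNReal.ofReal (exp (-x)) := by
  have hint : IntegrableOn (fun t => exp (-t)) (Ioi x) := by
    simpa using exp_neg_integrableOn_Ioi x one_pos
  rw [← ofReal_integral_eq_lintegral_ofReal hint (ae_of_all _ fun t => (exp_pos _).le),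
    integral_exp_neg_Ioi]

lemma lintegral_expMeasure_one {g : ℝ → ℝ≥0∞} (hg : Measurable g) :
    ∫⁻ t, g t ∂expMeasure 1 = ∫⁻ t in Ioi 0, ENNReal.ofReal (exp (-t)) * g t := by
  rw [expMeasure_one_eq_withDensity, lintegral_withDensity_eq_lintegral_mul _ (by fun_prop) hg]
  rfl

lemma expMeasure_one_Ioi {x : ℝ} (hx : 0 ≤ x) :
    expMeasure 1 (Ioi x) = ENNReal.ofReal (exp (-x)) := by
  rw [expMeasure_one_eq_withDensity, withDensity_apply _ measurableSet_Ioi,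
    Measure.restrict_restrict measurableSet_Ioi, Ioi_inter_Ioi, sup_of_le_left hx,
    lintegral_Ioi_ofReal_exp_neg]

lemma measure_Ioi_eq_one_of_le {ν : Measure ℝ} [IsProbabilityMeasure ν] {x y : ℝ}
    (hy : ν (Ioi y) = 1) (hxy : x ≤ y) : ν (Ioi x) = 1 :=
  le_antisymm prob_le_one (hy ▸ measure_mono (Ioi_subset_Ioi hxy))

lemma MeasureTheory.Measure.ext_of_Ioi {ν ν' : Measure ℝ} [IsProbabilityMeasure ν]
    [IsProbabilityMeasure ν']
    (h : ∀ x, ν (Ioi x) = ν' (Ioi x)) : ν = ν' := by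
  refine Measure.ext_of_Iic ν ν' fun x => ?_
  rw [← compl_Ioi, measure_compl measurableSet_Ioi (measure_ne_top _ _),
    measure_compl measurableSet_Ioi (measure_ne_top _ _), h, measure_univ, measure_univ]

lemma map_eq_expMeasure_one {Ω : Type*} [MeasurableSpace Ω] {μ : Measure Ω}
    [IsProbabilityMeasure μ] {X : Ω → ℝ} (hX : Measurable X)
    (htail : ∀ x : ℝ, 0 ≤ x → μ {ω | X ω > x} = ENNReal.ofReal (exp (-x))) :
    μ.map X = expMeasure 1 := by
  have : IsProbabilityMeasure (μ.map X) := Measure.isProbabilityMeasure_map hX.aemeasurable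
  have htail' : ∀ x, 0 ≤ x → μ.map X (Ioi x) = expMeasure 1 (Ioi x) := fun x hx => by
    rw [Measure.map_apply hX measurableSet_Ioi, expMeasure_one_Ioi hx]
    exact htail x hx
  refine Measure.ext_of_Ioi fun x => ?_
  rcases le_total 0 x with hx | hx
  · exact htail' x hx
  · have h0 : expMeasure 1 (Ioi 0) = 1 := by simp [expMeasure_one_Ioi le_rfl]
    rw [measure_Ioi_eq_one_of_le h0 hx, measure_Ioi_eq_one_of_le ((htail' 0 le_rfl).trans h0) hx]

/-- `P(E₁ + ⋯ + Eₙ > x)` for iid standard exponentials `Eᵢ`; for `x ≥ 0` this is the Poisson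
cumulative distribution function of mean `x` at `n - 1`. -/
noncomputable def erlangTail (n : ℕ) (x : ℝ) : ℝ :=
  if 0 ≤ x then exp (-x) * ∑ k ∈ Finset.range n, x ^ k / k ! else 1

lemma erlangTail_of_nonneg {n : ℕ} {x : ℝ} (hx : 0 ≤ x) :
    erlangTail n x = exp (-x) * ∑ k ∈ Finset.range n, x ^ k / k ! := if_pos hx

lemma erlangTail_of_neg {n : ℕ} {x : ℝ} (hx : x < 0) : erlangTail n x = 1 := if_neg hx.not_ge

lemma erlangTail_nonneg (n : ℕ) (x : ℝ) : 0 ≤ erlangTail n x := by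
  unfold erlangTail
  split_ifs
  · positivity
  · exact zero_le_one

@[fun_prop]
lemma measurable_erlangTail (n : ℕ) : Measurable (erlangTail n) :=
  Measurable.ite measurableSet_Ici (by fun_prop) measurable_const

lemma integral_sub_pow_div_factorial (k : ℕ) (x : ℝ) :
    ∫ t in (0 : ℝ)..x, (x - t) ^ k / k ! = x ^ (k + 1) / (k + 1)! := by
  rw [intervalIntegral.integral_div, intervalIntegral.integral_comp_sub_left (fun u => u ^ k) x,
    sub_self, sub_zero, integral_pow, Nat.factorial_succ]
  push_cast
  rw [zero_pow k.succ_ne_zero, sub_zero]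
  field_simp

lemma measure_pi_succ_setOf_lt_sum (ν : Measure ℝ) [SigmaFinite ν] (n : ℕ) (x : ℝ) :
    Measure.pi (fun _ : Fin (n + 1) => ν) {y | x < ∑ i, y i}
      = ∫⁻ t, Measure.pi (fun _ : Fin n => ν) {z | x - t < ∑ i, z i} ∂ν := by
  have hS : MeasurableSet {tz : ℝ × (Fin n → ℝ) | x - tz.1 < ∑ i, tz.2 i} :=
    measurableSet_lt (by fun_prop) (by fun_prop)
  have hpre : {y : Fin (n + 1) → ℝ | x < ∑ i, y i} = MeasurableEquiv.piFinSuccAbove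
      (fun _ => ℝ) 0 ⁻¹' {tz : ℝ × (Fin n → ℝ) | x - tz.1 < ∑ i, tz.2 i} := by
    ext y
    simp [Fin.sum_univ_succ y, MeasurableEquiv.piFinSuccAbove_apply, sub_lt_iff_lt_add', Fin.tail]
  rw [hpre, (measurePreserving_piFinSuccAbove (fun _ => ν) 0).measure_preimage
    hS.nullMeasurableSet, Measure.prod_apply hS]
  rfl

lemma lintegral_expMeasure_one_erlangTail_sub (n : ℕ) (x : ℝ) :
    ∫⁻ t, ENNReal.ofReal (erlangTail n (x - t)) ∂expMeasure 1
      = ENNReal.ofReal (erlangTail (n + 1) x) := by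
  rw [lintegral_expMeasure_one (by fun_prop)]
  have htail : ∀ t > x, ENNReal.ofReal (exp (-t)) * ENNReal.ofReal (erlangTail n (x - t))
      = ENNReal.ofReal (exp (-t)) := fun t ht => by
    rw [erlangTail_of_neg (sub_neg.2 ht), ENNReal.ofReal_one, mul_one]
  rcases lt_or_ge x 0 with hx | hx
  · rw [setLIntegral_congr_fun measurableSet_Ioi fun t (ht : 0 < t) => htail t (hx.trans ht),
      lintegral_Ioi_ofReal_exp_neg, erlangTail_of_neg hx, neg_zero, exp_zero]
  have hbody : ∀ t ∈ Ioc 0 x, ENNReal.ofReal (exp (-t)) * ENNReal.ofReal (erlangTail n (x - t))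
      = ENNReal.ofReal (exp (-x) * ∑ k ∈ Finset.range n, (x - t) ^ k / k !) := fun t ht => by
    rw [erlangTail_of_nonneg (sub_nonneg.2 ht.2), ← ENNReal.ofReal_mul (exp_pos _).le,
      ← mul_assoc, ← exp_add]
    ring_nf
  have hnonneg : 0 ≤ exp (-x) * ∑ k ∈ Finset.range n, x ^ (k + 1) / (k + 1)! := by positivity
  have hbulk : ∫ t in Ioc 0 x, exp (-x) * ∑ k ∈ Finset.range n, (x - t) ^ k / k !
      = exp (-x) * ∑ k ∈ Finset.range n, x ^ (k + 1) / (k + 1)! := by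
    rw [integral_const_mul, ← intervalIntegral.integral_of_le hx,
      intervalIntegral.integral_finsetSum fun k _ =>
        (by fun_prop : Continuous _).intervalIntegrable _ _]
    simp only [integral_sub_pow_div_factorial]
  rw [← Ioc_union_Ioi_eq_Ioi hx, lintegral_union measurableSet_Ioi (Ioc_disjoint_Ioi le_rfl),
    setLIntegral_congr_fun measurableSet_Ioc hbody,
    setLIntegral_congr_fun measurableSet_Ioi htail, lintegral_Ioi_ofReal_exp_neg,
    ← ofReal_integral_eq_lintegral_ofReal (Continuous.integrableOn_Ioc (by fun_prop)), hbulk,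
    ← ENNReal.ofReal_add hnonneg (exp_pos _).le, erlangTail_of_nonneg hx, Finset.sum_range_succ']
  · simp only [pow_zero, Nat.factorial_zero, Nat.cast_one, div_one]
    ring_nf
  · refine (ae_restrict_iff' measurableSet_Ioc).2 (ae_of_all _ fun t ht => ?_)
    have : 0 ≤ x - t := sub_nonneg.2 ht.2
    positivity

lemma measure_pi_expMeasure_one_setOf_lt_sum (n : ℕ) (x : ℝ) :
    Measure.pi (fun _ : Fin n => expMeasure 1) {y | x < ∑ i, y i}
      = ENNReal.ofReal (erlangTail n x) := by
  induction n generalizing x with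
  | zero =>
    rcases lt_or_ge x 0 with hx | hx
    · simp [hx, erlangTail_of_neg hx]
    · simp [hx.not_gt, erlangTail_of_nonneg hx]
  | succ n ih =>
    simp only [measure_pi_succ_setOf_lt_sum, ih, lintegral_expMeasure_one_erlangTail_sub]

lemma measure_pi_option_eq_lintegral {ι α : Type*} [Fintype ι] [MeasurableSpace α]
    (ρ ν : Measure α) [SigmaFinite ρ] [SigmaFinite ν] {S : Set (Option ι → α)} (hS : MeasurableSet S) :
    Measure.pi (fun i : Option ι => i.elim ρ fun _ => ν) S
      = ∫⁻ v, Measure.pi (fun _ : ι => ν) {z | (fun i => i.elim v z) ∈ S} ∂ρ := by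
  have : ∀ i : Option ι, SigmaFinite (i.elim ρ fun _ => ν) := by
    rintro (_ | _) <;> dsimp only [Option.elim] <;> infer_instance
  have he : ∀ z v, (MeasurableEquiv.piOptionEquivProd fun _ : Option ι => α).symm (z, v)
      = fun i => i.elim v z := fun z v => by
    ext (_ | i) <;> rfl
  rw [← Measure.pi_map_piOptionEquivProd, MeasurableEquiv.map_apply,
    Measure.prod_apply_symm (hS.preimage (MeasurableEquiv.measurable _))]
  simp only [preimage_preimage, he]
  rfl

lemma measure_pi_sum_setOf_lt_sum_and_lt_sum {ι κ : Type*} [Fintype ι] [Fintype κ]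
    (ν : Measure ℝ) [SigmaFinite ν] (x y : ℝ) :
    Measure.pi (fun _ : ι ⊕ κ => ν) {z | x < ∑ i, z (.inl i) ∧ y < ∑ k, z (.inr k)}
      = Measure.pi (fun _ : ι => ν) {z | x < ∑ i, z i}
        * Measure.pi (fun _ : κ => ν) {z | y < ∑ k, z k} := by
  have hS : MeasurableSet ({z : ι → ℝ | x < ∑ i, z i} ×ˢ {z : κ → ℝ | y < ∑ k, z k}) :=
    (measurableSet_lt measurable_const (by fun_prop)).prod
      (measurableSet_lt measurable_const (by fun_prop))
  rw [← Measure.prod_prod, ← (measurePreserving_sumPiEquivProdPi fun _ => ν).measure_preimage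
    hS.nullMeasurableSet]
  rfl

lemma measure_sum_gt_mul_and_sum_gt_mul {Ω : Type*} [MeasurableSpace Ω] {μ : Measure Ω}
    [IsProbabilityMeasure μ] {p q : ℕ} {V : Ω → ℝ} {E1 : Fin p → Ω → ℝ} {E2 : Fin q → Ω → ℝ}
    (hVm : Measurable V) (hE1m : ∀ j, Measurable (E1 j)) (hE2m : ∀ k, Measurable (E2 k))
    (hlaw : ∀ i, μ.map (Sum.elim E1 E2 i) = expMeasure 1)
    (hindep : iIndepFun (fun i : Option (Fin p ⊕ Fin q) => i.elim V (Sum.elim E1 E2)) μ)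
    (a b : ℝ) :
    μ {ω | (∑ j, E1 j ω) > V ω * a ∧ (∑ k, E2 k ω) > V ω * b}
      = ∫⁻ v, ENNReal.ofReal (erlangTail p (v * a)) * ENNReal.ofReal (erlangTail q (v * b))
          ∂μ.map V := by
  set X : Option (Fin p ⊕ Fin q) → Ω → ℝ := fun i => i.elim V (Sum.elim E1 E2)
  have hXm : ∀ i, Measurable (X i) := by
    rintro (_ | j | k)
    exacts [hVm, hE1m j, hE2m k]
  have hlaws : (fun i => μ.map (X i)) = fun i => i.elim (μ.map V) fun _ => expMeasure 1 := by
    ext1 (_ | i)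
    exacts [rfl, hlaw i]
  set S : Set (Option (Fin p ⊕ Fin q) → ℝ) :=
    {x | x none * a < ∑ j, x (some (.inl j))} ∩ {x | x none * b < ∑ k, x (some (.inr k))}
  have hS : MeasurableSet S :=
    (measurableSet_lt (by fun_prop) (by fun_prop)).inter
      (measurableSet_lt (by fun_prop) (by fun_prop))
  change μ ((fun ω i => X i ω) ⁻¹' S) = _
  rw [← Measure.map_apply (measurable_pi_lambda _ hXm) hS,
    hindep.map_fun_eq_pi_map fun i => (hXm i).aemeasurable, hlaws,
    measure_pi_option_eq_lintegral _ _ hS]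
  refine lintegral_congr fun v => ?_
  rw [← measure_pi_expMeasure_one_setOf_lt_sum, ← measure_pi_expMeasure_one_setOf_lt_sum]
  exact measure_pi_sum_setOf_lt_sum_and_lt_sum (expMeasure 1) (v * a) (v * b)

lemma pow_mul_exp_neg_mul_le (m : ℕ) {s v : ℝ} (hs : 0 < s) (hv : 0 ≤ v) :
    v ^ m * exp (-(s * v)) ≤ m ! / s ^ m := by
  have h := pow_div_factorial_le_exp (s * v) (mul_nonneg hs.le hv) m
  rw [div_le_iff₀ (by positivity)] at h
  rw [le_div_iff₀ (by positivity)]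
  calc v ^ m * exp (-(s * v)) * s ^ m = (s * v) ^ m * exp (-(s * v)) := by ring
    _ ≤ exp (s * v) * m ! * exp (-(s * v)) := by gcongr
    _ = m ! := by rw [mul_right_comm, ← exp_add, add_neg_cancel, exp_zero, one_mul]

section LaplaceTransform

variable {ρ : Measure ℝ} [IsFiniteMeasure ρ]

lemma integrable_pow_mul_exp_neg_mul (hρ : ∀ᵐ v ∂ρ, 0 ≤ v) (m : ℕ) {s : ℝ} (hs : 0 < s) :
    Integrable (fun v => v ^ m * exp (-(s * v))) ρ := by
  refine (integrable_const (m ! / s ^ m : ℝ)).mono' (by fun_prop) ?_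
  filter_upwards [hρ] with v hv
  rw [norm_of_nonneg (by positivity)]
  exact pow_mul_exp_neg_mul_le m hs hv

lemma hasDerivAt_integral_pow_mul_exp_neg_mul (hρ : ∀ᵐ v ∂ρ, 0 ≤ v) (m : ℕ) {s₀ : ℝ}
    (hs₀ : 0 < s₀) :
    HasDerivAt (fun s => ∫ v, v ^ m * exp (-(s * v)) ∂ρ)
      (-∫ v, v ^ (m + 1) * exp (-(s₀ * v)) ∂ρ) s₀ := by
  have hderiv : ∀ v s : ℝ, HasDerivAt (fun s => v ^ m * exp (-(s * v)))
      (-(v ^ (m + 1) * exp (-(s * v)))) s := fun v s => by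
    have hlin : HasDerivAt (fun s => -(s * v)) (-v) s := by
      simpa using ((hasDerivAt_id s).mul_const v).fun_neg
    exact (hlin.exp.const_mul (v ^ m)).congr_deriv (by ring)
  have hbound : ∀ᵐ v ∂ρ, ∀ s ∈ Metric.ball s₀ (s₀ / 2),
      ‖-(v ^ (m + 1) * exp (-(s * v)))‖ ≤ (m + 1)! / (s₀ / 2) ^ (m + 1) := by
    filter_upwards [hρ] with v hv s hs
    have hs' : s₀ / 2 ≤ s := by
      rw [Metric.mem_ball, dist_eq, abs_lt] at hs
      linarith
    rw [norm_neg, norm_of_nonneg (by positivity)]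
    calc v ^ (m + 1) * exp (-(s * v)) ≤ v ^ (m + 1) * exp (-(s₀ / 2 * v)) := by gcongr
      _ ≤ _ := pow_mul_exp_neg_mul_le (m + 1) (by positivity) hv
  have h := (hasDerivAt_integral_of_dominated_loc_of_deriv_le (Metric.ball_mem_nhds s₀
    (half_pos hs₀)) (Filter.Eventually.of_forall fun s => by fun_prop)
    (integrable_pow_mul_exp_neg_mul hρ m hs₀) (by fun_prop) hbound (integrable_const _)
    (ae_of_all _ fun v s _ => hderiv v s)).2
  rwa [integral_neg] at h

lemma iteratedDeriv_eq_integral_of_eqOn_laplace (hρ : ∀ᵐ v ∂ρ, 0 ≤ v) {ψ : ℝ → ℝ}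
    (hψ : ∀ s, 0 < s → ψ s = ∫ v, exp (-(s * v)) ∂ρ) (m : ℕ) {s : ℝ} (hs : 0 < s) :
    iteratedDeriv m ψ s = (-1) ^ m * ∫ v, v ^ m * exp (-(s * v)) ∂ρ := by
  induction m generalizing s with
  | zero => simpa using hψ s hs
  | succ m ih =>
    have hev : iteratedDeriv m ψ =ᶠ[nhds s]
        fun u => (-1) ^ m * ∫ v, v ^ m * exp (-(u * v)) ∂ρ :=
      Filter.eventually_of_mem (Ioi_mem_nhds hs) fun u hu => ih hu
    rw [iteratedDeriv_succ, hev.deriv_eq,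
      ((hasDerivAt_integral_pow_mul_exp_neg_mul hρ m hs).const_mul _).deriv, pow_succ]
    ring

end LaplaceTransform

lemma sum_range_sum_range_eq_sum_diagonals {M : Type*} [AddCommMonoid M] {p q : ℕ}
    (hp : 0 < p) (hq : 0 < q) (f : ℕ → ℕ → M) :
    ∑ k ∈ Finset.range p, ∑ l ∈ Finset.range q, f k l
      = ∑ m ∈ Finset.range (p + q - 1), ∑ n ∈ Finset.range (m + 1),
          if n ≤ p - 1 ∧ m - n ≤ q - 1 then f n (m - n) else 0 := by
  simp only [← Finset.sum_filter]
  rw [← Finset.sum_product', Finset.sum_sigma']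
  refine Finset.sum_bij' (fun kl _ => ⟨kl.1 + kl.2, kl.1⟩) (fun mn _ => (mn.2, mn.1 - mn.2))
    ?_ ?_ ?_ ?_ ?_
  all_goals
    rintro ⟨i, j⟩ h
    simp only [Finset.mem_product, Finset.mem_sigma, Finset.mem_filter, Finset.mem_range] at h ⊢
  · omega
  · omega
  · simp
  · simp only [Sigma.mk.injEq, heq_eq_eq, and_true]
    omega
  · simp only [add_tsub_cancel_left]

lemma erlangTail_mul_erlangTail (p q : ℕ) {a b v : ℝ} (ha : 0 ≤ a) (hb : 0 ≤ b) (hv : 0 ≤ v) :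
    erlangTail p (v * a) * erlangTail q (v * b)
      = ∑ k ∈ Finset.range p, ∑ l ∈ Finset.range q,
          a ^ k / k ! * (b ^ l / l !) * (v ^ (k + l) * exp (-((a + b) * v))) := by
  rw [erlangTail_of_nonneg (by positivity), erlangTail_of_nonneg (by positivity),
    mul_mul_mul_comm, ← exp_add, Finset.sum_mul_sum, Finset.mul_sum]
  refine Finset.sum_congr rfl fun k _ => ?_
  rw [Finset.mul_sum]
  refine Finset.sum_congr rfl fun l _ => ?_
  ring_nf

lemma integral_erlangTail_mul_erlangTail {ρ : Measure ℝ} [IsFiniteMeasure ρ]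
    (hρ : ∀ᵐ v ∂ρ, 0 ≤ v) (p q : ℕ) {a b : ℝ} (ha : 0 ≤ a) (hb : 0 ≤ b) (hab : 0 < a + b) :
    ∫ v, erlangTail p (v * a) * erlangTail q (v * b) ∂ρ
      = ∑ k ∈ Finset.range p, ∑ l ∈ Finset.range q,
          a ^ k / k ! * (b ^ l / l !) * ∫ v, v ^ (k + l) * exp (-((a + b) * v)) ∂ρ := by
  have hint : ∀ k l : ℕ, Integrable (fun v => a ^ k / k ! * (b ^ l / l !) *
      (v ^ (k + l) * exp (-((a + b) * v)))) ρ := fun k l =>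
    (integrable_pow_mul_exp_neg_mul hρ (k + l) hab).const_mul _
  rw [integral_congr_ae (hρ.mono fun v hv => erlangTail_mul_erlangTail p q ha hb hv),
    integral_finsetSum _ fun k _ => integrable_finsetSum _ fun l _ => hint k l]
  refine Finset.sum_congr rfl fun k _ => ?_
  rw [integral_finsetSum _ fun l _ => hint k l]
  simp only [integral_const_mul]

theorem stmt9 {Ω : Type*} [MeasurableSpace Ω] (μ : Measure Ω) [IsProbabilityMeasure μ]
    (p q : ℕ) (hp : 0 < p) (hq : 0 < q)
    (V : Ω → ℝ) (hVm : Measurable V) (hV : ∀ᵐ ω ∂μ, 0 < V ω)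
    (E1 : Fin p → Ω → ℝ) (E2 : Fin q → Ω → ℝ)
    (hE1m : ∀ j, Measurable (E1 j)) (hE2m : ∀ k, Measurable (E2 k))
    (ψ : ℝ → ℝ)
    -- ψ is the Laplace transform of the positive random variable V
    (hψ : ∀ s : ℝ, 0 ≤ s → ψ s = ∫ ω, Real.exp (-(s * V ω)) ∂μ)
    -- the E's are iid standard exponentials, jointly independent of V
    (hE1d : ∀ j, ∀ x : ℝ, 0 ≤ x → μ {ω | E1 j ω > x} = ENNReal.ofReal (Real.exp (-x)))
    (hE2d : ∀ k, ∀ x : ℝ, 0 ≤ x → μ {ω | E2 k ω > x} = ENNReal.ofReal (Real.exp (-x)))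
    (hindep : iIndepFun
      (fun i : Option (Fin p ⊕ Fin q) => i.elim V (Sum.elim E1 E2)) μ)
    (a b : ℝ) (ha : 0 < a) (hb : 0 < b) :
    (μ {ω | (∑ j, E1 j ω) > V ω * a ∧ (∑ k, E2 k ω) > V ω * b}).toReal =
    ∑ m ∈ Finset.range (p + q - 1),
      (∑ n ∈ Finset.range (m + 1),
        if n ≤ p - 1 ∧ m - n ≤ q - 1 then
          a ^ n / n.factorial * (b ^ (m - n) / (m - n).factorial) else 0) *
      ((-1 : ℝ) ^ m * iteratedDeriv m ψ (a + b)) := by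
  set ρ := μ.map V
  have hρ : ∀ᵐ v ∂ρ, 0 ≤ v :=
    (ae_map_iff hVm.aemeasurable measurableSet_Ici).2 (hV.mono fun _ h => h.le)
  have hlaw : ∀ i, μ.map (Sum.elim E1 E2 i) = expMeasure 1 := by
    rintro (j | k)
    exacts [map_eq_expMeasure_one (hE1m j) (hE1d j), map_eq_expMeasure_one (hE2m k) (hE2d k)]
  have hmoment : ∀ m, (-1 : ℝ) ^ m * iteratedDeriv m ψ (a + b)
      = ∫ v, v ^ m * exp (-((a + b) * v)) ∂ρ := fun m => by
    have hψρ : ∀ s, 0 < s → ψ s = ∫ v, exp (-(s * v)) ∂ρ := fun s hs => by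
      rw [hψ s hs.le, integral_map hVm.aemeasurable (by fun_prop)]
    rw [iteratedDeriv_eq_integral_of_eqOn_laplace hρ hψρ m (add_pos ha hb), ← mul_assoc,
      ← mul_pow, neg_one_mul, neg_neg, one_pow, one_mul]
  simp_rw [measure_sum_gt_mul_and_sum_gt_mul hVm hE1m hE2m hlaw hindep,
    ← ENNReal.ofReal_mul (erlangTail_nonneg _ _)]
  rw [← integral_eq_lintegral_of_nonneg_ae
      (ae_of_all _ fun v => mul_nonneg (erlangTail_nonneg _ _) (erlangTail_nonneg _ _))
      (by fun_prop),
    integral_erlangTail_mul_erlangTail hρ p q ha.le hb.le (add_pos ha hb),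
    sum_range_sum_range_eq_sum_diagonals hp hq]
  simp_rw [hmoment, Finset.sum_mul, ite_mul, zero_mul]
  refine Finset.sum_congr rfl fun m _ => Finset.sum_congr rfl fun n hn => ?_
  rw [Nat.add_sub_cancel' (Finset.mem_range_succ_iff.1 hn)]
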